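/- Let N \ge 2, let z_1 > ... > z_N be the zeros of the Hermite polynomial H_N, and let S_N be the N\times N matrix with entries s_{ii} = 1 + \sum_{l \ne i} (z_i - z_l)^{-2} and s_{ij} = -(z_i - z_j)^{-2} for i \ne j. Then (z_1, ..., z_N)^T is an eigenvector of S_N with eigenvalue 2. -/

import Mathlib

/-!
Since `H_N = 2^N ∏ (X - z_k)` and `H_N'' = 2 X H_N' - 2 N H_N`, writing `H_N = 2^N (X - z_i) Q`
and evaluating the differential equation at `z_i` gives `Q'(z_i) = z_i Q(z_i)`, that is the
Stieltjes relation `∑_{k ≠ i} (z_i - z_k)⁻¹ = z_i`. The `i`-th entry of `S_N z` is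
`z_i + ∑_{j ≠ i} (z_i - z_j) / (z_i - z_j)^2`, which is therefore `2 z_i`.
-/

open Polynomial Finset Matrix

/-- The physicists' Hermite polynomials, orthogonal w.r.t. the weight `e^{-x^2}`. -/
noncomputable def physHermite : ℕ → Polynomial ℝ
  | 0 => 1
  | 1 => 2 * X
  | n + 2 => 2 * X * physHermite (n + 1) - C (2 * ((n : ℝ) + 1)) * physHermite n

theorem eval_derivative_X_sub_C_mul {R : Type*} [CommRing R] (a : R) (q : R[X]) :
    eval a (derivative ((X - C a) * q)) = eval a q := by
  simp

theorem eval_derivative_derivative_X_sub_C_mul {R : Type*} [CommRing R] (a : R) (q : R[X]) :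
    eval a (derivative (derivative ((X - C a) * q))) = 2 * eval a (derivative q) := by
  simp; ring

theorem eval_derivative_prod_X_sub_C {K ι : Type*} [Field K] (s : Finset ι) (w : ι → K) {x : K}
    (hx : ∀ k ∈ s, x ≠ w k) :
    eval x (derivative (∏ k ∈ s, (X - C (w k)))) =
      eval x (∏ k ∈ s, (X - C (w k))) * ∑ k ∈ s, (x - w k)⁻¹ := by
  classical
  induction s using Finset.induction_on with
  | empty => simp
  | insert a s ha ih =>
    have hxa : x - w a ≠ 0 := sub_ne_zero.mpr (hx a (mem_insert_self a s))
    rw [prod_insert ha, sum_insert ha, derivative_mul, eval_add, eval_mul, eval_mul, eval_mul,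
      ih fun k hk => hx k (mem_insert_of_mem hk)]
    simp only [derivative_sub, derivative_X, derivative_C, sub_zero, eval_one, eval_sub, eval_X,
      eval_C]
    field_simp

theorem degree_derivative_lt_degree_two_mul_X_mul {K : Type*} [Field K] [CharZero K] {p : K[X]}
    (hp : p ≠ 0) :
    (derivative p).degree < (2 * X * p).degree := by
  rw [degree_mul, ← C_ofNat, degree_C_mul_X two_ne_zero]
  refine (degree_derivative_lt hp).trans_le ?_
  rw [degree_eq_natDegree hp]
  exact_mod_cast Nat.le_add_left _ _

theorem mulVec_apply_eq_add_sum_inv_sub {K ι : Type*} [Field K] [Fintype ι] [DecidableEq ι]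
    {z : ι → K} (hz : Function.Injective z) {S : Matrix ι ι K}
    (hS : ∀ i j, S i j = if i = j
      then 1 + ∑ l ∈ univ.erase i, ((z i - z l) ^ 2)⁻¹
      else -((z i - z j) ^ 2)⁻¹) (i : ι) :
    (S *ᵥ z) i = z i + ∑ j ∈ univ.erase i, (z i - z j)⁻¹ := by
  rw [mulVec, dotProduct, ← add_sum_erase _ _ (mem_univ i), hS, if_pos rfl, add_mul, one_mul,
    sum_mul, add_assoc, ← sum_add_distrib]
  congr 1
  refine sum_congr rfl fun j hj => ?_
  have hij : i ≠ j := (ne_of_mem_erase hj).symm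
  have hne : z i - z j ≠ 0 := sub_ne_zero.mpr (hz.ne hij)
  rw [hS, if_neg hij]
  field_simp
  ring

theorem derivative_physHermite_succ (n : ℕ) :
    derivative (physHermite (n + 1)) = C (2 * ((n : ℝ) + 1)) * physHermite n := by
  induction n using Nat.twoStepInduction with
  | zero => simp [physHermite, map_ofNat]
  | one => simp [physHermite, map_ofNat]; ring
  | more m ih₀ ih₁ =>
    rw [physHermite, derivative_sub, derivative_mul, derivative_C_mul, ih₁, ih₀,
      physHermite]
    simp only [derivative_mul, derivative_ofNat, derivative_X, map_mul, map_add, map_ofNat,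
      map_natCast, map_one, Nat.cast_add, Nat.cast_one]
    ring

theorem physHermite_succ (n : ℕ) :
    physHermite (n + 1) = 2 * X * physHermite n - derivative (physHermite n) := by
  cases n with
  | zero => simp [physHermite]
  | succ m => rw [physHermite, derivative_physHermite_succ]

theorem physHermite_ode (n : ℕ) :
    derivative (derivative (physHermite n)) =
      2 * X * derivative (physHermite n) - C (2 * (n : ℝ)) * physHermite n := by
  cases n with
  | zero => simp [physHermite]
  | succ m =>
    rw [derivative_physHermite_succ, derivative_C_mul, physHermite_succ m]
    push_cast
    ring

theorem degree_physHermite (n : ℕ) : (physHermite n).degree = n := by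
  induction n with
  | zero => simp [physHermite]
  | succ m ih =>
    have hne : physHermite m ≠ 0 := by rintro h; simp [h] at ih
    rw [physHermite_succ,
      degree_sub_eq_left_of_degree_lt (degree_derivative_lt_degree_two_mul_X_mul hne),
      degree_mul, ih, ← C_ofNat, degree_C_mul_X two_ne_zero]
    push_cast; ring

theorem leadingCoeff_physHermite (n : ℕ) : (physHermite n).leadingCoeff = 2 ^ n := by
  induction n with
  | zero => simp [physHermite]
  | succ m ih =>
    have hne : physHermite m ≠ 0 := by
      rintro h; simpa [h] using degree_physHermite m
    rw [physHermite_succ,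
      leadingCoeff_sub_of_degree_lt (degree_derivative_lt_degree_two_mul_X_mul hne),
      leadingCoeff_mul, ih, ← C_ofNat, leadingCoeff_C_mul_X, pow_succ']

theorem physHermite_eq_C_mul_prod {n : ℕ} {z : Fin n → ℝ} (hz : Function.Injective z)
    (hroot : ∀ i, (physHermite n).eval (z i) = 0) :
    physHermite n = C (2 ^ n) * ∏ i, (X - C (z i)) := by
  have hmonic : (∏ i, (X - C (z i))).Monic := monic_prod_of_monic _ _ fun i _ => monic_X_sub_C _
  have hdeg : (∏ i, (X - C (z i))).degree = (n : WithBot ℕ) := by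
    rw [degree_prod]; simp
  refine eq_of_degree_le_of_eval_index_eq (v := z) univ hz.injOn ?_ ?_ ?_ ?_
  · simp [degree_physHermite]
  · rw [degree_physHermite, degree_C_mul (by positivity), hdeg]
  · rw [leadingCoeff_physHermite, leadingCoeff_mul_monic hmonic, leadingCoeff_C]
  · intro i _
    rw [hroot, eval_mul, eval_prod, prod_eq_zero (mem_univ i) (by simp), mul_zero]

theorem sum_inv_sub_eq_of_eval_physHermite_eq_zero {n : ℕ} {z : Fin n → ℝ}
    (hz : Function.Injective z) (hroot : ∀ i, (physHermite n).eval (z i) = 0) (i : Fin n) :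
    ∑ k ∈ univ.erase i, (z i - z k)⁻¹ = z i := by
  set Q := ∏ k ∈ univ.erase i, (X - C (z k))
  have hQ : eval (z i) Q ≠ 0 := by
    rw [eval_prod, prod_ne_zero_iff]
    exact fun k hk => by simpa [sub_eq_zero] using hz.ne (ne_of_mem_erase hk).symm
  have hH : physHermite n = C (2 ^ n) * ((X - C (z i)) * Q) := by
    rw [physHermite_eq_C_mul_prod hz hroot,
      ← mul_prod_erase _ (fun k => X - C (z k)) (mem_univ i)]
  have hode := congrArg (eval (z i)) (physHermite_ode n)
  rw [hH, derivative_C_mul, derivative_C_mul] at hode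
  simp only [eval_mul, eval_C, eval_X, eval_ofNat, eval_sub, sub_self, zero_mul, mul_zero,
    sub_zero, eval_derivative_X_sub_C_mul, eval_derivative_derivative_X_sub_C_mul] at hode
  rw [eval_derivative_prod_X_sub_C _ _ fun k hk => hz.ne (ne_of_mem_erase hk).symm] at hode
  have h2 : (2 : ℝ) ^ (n + 1) ≠ 0 := by positivity
  exact mul_left_cancel₀ hQ (mul_left_cancel₀ h2 (by linear_combination hode))

theorem stmt_6 (N : ℕ) (hN : 2 ≤ N) (z : Fin N → ℝ)
    (hord : ∀ i j : Fin N, i < j → z j < z i)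
    (hroot : ∀ i, (physHermite N).eval (z i) = 0)
    (S : Matrix (Fin N) (Fin N) ℝ)
    (hS : ∀ i j, S i j = if i = j
      then 1 + ∑ l ∈ Finset.univ.erase i, ((z i - z l) ^ 2)⁻¹
      else -((z i - z j) ^ 2)⁻¹) :
    S.mulVec z = (2 : ℝ) • z ∧ z ≠ 0 := by
  have hz : Function.Injective z := StrictAnti.injective hord
  refine ⟨funext fun i => ?_, fun h => ?_⟩
  · rw [mulVec_apply_eq_add_sum_inv_sub hz hS,
      sum_inv_sub_eq_of_eval_physHermite_eq_zero hz hroot, Pi.smul_apply, smul_eq_mul, two_mul]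
  · have h01 : (⟨0, by omega⟩ : Fin N) ≠ ⟨1, by omega⟩ := by simp
    exact hz.ne h01 (by simp [h])
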